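/- arXiv:2405.07576 — 2 statements merged into one kernel-verified Lean document; each statement's English description precedes it below -/
import Mathlib

section
/- Let A : ℝ≥0 → ℝ^{m×m} be piecewise continuous and suppose its transition matrix satisfies ‖Φ(τ, t)‖ ≤ γ e^{-λ(τ - t)} for all τ ≥ t ≥ 0. Fix a symmetric positive definite Q ∈ ℝ^{m×m} and define P(t) = ∫_t^∞ Φ(τ, t)ᵀ Q Φ(τ, t) dτ. Then the integral converges for every t ≥ 0, P(t) is symmetric, and there exist constants c₁, c₂ > 0 such that c₁‖v‖² ≤ vᵀ P(t) v ≤ c₂‖v‖² for all v ∈ ℝ^m and t ≥ 0. -/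
open Matrix RealInnerProductSpace

open MeasureTheory Set in
private lemma aux_inner' {m : ℕ} (M : Matrix (Fin m) (Fin m) ℝ) (x y : EuclideanSpace ℝ (Fin m)) :
    ⟪x, Matrix.toEuclideanLin M y⟫ =
      (WithLp.equiv 2 (Fin m → ℝ) x) ⬝ᵥ (M *ᵥ (WithLp.equiv 2 (Fin m → ℝ) y)) := by
  simp [Matrix.toEuclideanLin_apply, PiLp.inner_apply, dotProduct, RCLike.inner_apply, mul_comm]

open MeasureTheory Set in
private lemma exp_int' (t : ℝ) {b : ℝ} (hb : 0 < b) :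
    ∫ τ in Set.Ioi t, Real.exp (-(b * (τ - t))) = 1 / b := by
  have h := MeasureTheory.integral_comp_mul_right_Ioi (fun x => Real.exp (b * t - x)) t hb
  simp only [smul_eq_mul] at h
  have h1 : (fun τ : ℝ => Real.exp (-(b * (τ - t)))) = fun τ => Real.exp (b * t - τ * b) := by
    funext τ; ring_nf
  rw [h1, h]
  have h2 : ∫ x in Set.Ioi (t * b), Real.exp (b * t - x)
      = Real.exp (b * t) * ∫ x in Set.Ioi (t * b), Real.exp (-x) := by
    rw [← MeasureTheory.integral_const_mul]
    congr 1; funext x; rw [← Real.exp_add]; ring_nf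
  rw [h2, integral_exp_neg_Ioi, ← Real.exp_add]
  have : b * t + -(t * b) = 0 := by ring
  rw [this, Real.exp_zero, mul_one, one_div]

open Set in
private lemma gronwall_lower' {E : Type*} [NormedAddCommGroup E] [NormedSpace ℝ E]
    {f f' : ℝ → E} {a : ℝ}
    (hf : ∀ s, HasDerivAt f (f' s) s) (hb : ∀ s, ‖f' s‖ ≤ a * ‖f s‖) {t s : ℝ} (hts : t ≤ s) :
    ‖f t‖ ≤ Real.exp (a * (s - t)) * ‖f s‖ := by
  set g : ℝ → E := fun u => f (t + s - u) with hg
  have hgd : ∀ u, HasDerivAt g (-(f' (t + s - u))) u := by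
    intro u
    have h1 : HasDerivAt (fun u : ℝ => t + s - u) (-1) u := by
      simpa using (hasDerivAt_id u).const_sub (t + s)
    have := (hf (t + s - u)).scomp u h1
    simpa [hg, Function.comp_def] using this
  have key := norm_le_gronwallBound_of_norm_deriv_right_le (f := g)
      (f' := fun u => -(f' (t + s - u))) (δ := ‖g t‖) (K := a) (ε := 0) (a := t) (b := s)
      (fun u _ => (hgd u).continuousAt.continuousWithinAt)
      (fun u _ => (hgd u).hasDerivWithinAt.mono (fun x hx => hx))
      le_rfl
      (fun u _ => by rw [norm_neg, add_zero]; exact hb _)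
      s ⟨hts, le_rfl⟩
  rw [gronwallBound_ε0] at key
  have e1 : g s = f t := by simp [hg]
  have e2 : g t = f s := by simp [hg]
  rw [e1, e2] at key
  linarith [key]

private lemma posdef_coercive' {m : ℕ} {Q : Matrix (Fin m) (Fin m) ℝ} (hQ : Q.PosDef) :
    ∃ μ > (0:ℝ), ∀ v : EuclideanSpace ℝ (Fin m),
      μ * ‖v‖ ^ 2 ≤ ⟪v, Matrix.toEuclideanLin Q v⟫ := by
  have hpos : ∀ v : EuclideanSpace ℝ (Fin m), v ≠ 0 →
      0 < ⟪v, Matrix.toEuclideanLin Q v⟫ := by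
    intro v hv
    rw [aux_inner']
    have hv' : (WithLp.equiv 2 (Fin m → ℝ) v) ≠ 0 := by
      simpa using (WithLp.equiv 2 (Fin m → ℝ)).injective.ne hv
    simpa using hQ.dotProduct_mulVec_pos hv'
  have hcont : Continuous fun v : EuclideanSpace ℝ (Fin m) =>
      ⟪v, Matrix.toEuclideanLin Q v⟫ := by
    exact continuous_id.inner ((Matrix.toEuclideanLin Q).continuous_of_finiteDimensional)
  by_cases hne : (Metric.sphere (0 : EuclideanSpace ℝ (Fin m)) 1).Nonempty
  · obtain ⟨x₀, hx₀s, hx₀min⟩ :=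
      (isCompact_sphere (0 : EuclideanSpace ℝ (Fin m)) 1).exists_isMinOn hne hcont.continuousOn
    have hx₀norm : ‖x₀‖ = 1 := by simpa using hx₀s
    have hx₀ne : x₀ ≠ 0 := by intro h; rw [h] at hx₀norm; simp at hx₀norm
    refine ⟨⟪x₀, Matrix.toEuclideanLin Q x₀⟫, hpos _ hx₀ne, fun v => ?_⟩
    rcases eq_or_ne v 0 with rfl | hv
    · simp
    · have hvn : ‖v‖ ≠ 0 := norm_ne_zero_iff.2 hv
      set u : EuclideanSpace ℝ (Fin m) := ‖v‖⁻¹ • v with hu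
      have hus : u ∈ Metric.sphere (0 : EuclideanSpace ℝ (Fin m)) 1 := by
        simp [hu, norm_smul, abs_of_nonneg (norm_nonneg v), inv_mul_cancel₀ hvn]
      have hvu : v = ‖v‖ • u := by
        rw [hu, smul_smul, mul_inv_cancel₀ hvn, one_smul]
      have h1 : ⟪x₀, Matrix.toEuclideanLin Q x₀⟫ ≤ ⟪u, Matrix.toEuclideanLin Q u⟫ := hx₀min hus
      calc ⟪x₀, Matrix.toEuclideanLin Q x₀⟫ * ‖v‖ ^ 2
          ≤ ⟪u, Matrix.toEuclideanLin Q u⟫ * ‖v‖ ^ 2 := by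
            apply mul_le_mul_of_nonneg_right h1 (by positivity)
        _ = ⟪v, Matrix.toEuclideanLin Q v⟫ := by
            have hs : ⟪(‖v‖:ℝ) • u, Matrix.toEuclideanLin Q ((‖v‖:ℝ) • u)⟫
                = ‖v‖ ^ 2 * ⟪u, Matrix.toEuclideanLin Q u⟫ := by
              rw [LinearMap.map_smul, real_inner_smul_left, real_inner_smul_right]; ring
            rw [← hvu] at hs
            rw [hs]; ring
  · refine ⟨1, one_pos, fun v => ?_⟩
    have hv0 : v = 0 := by
      by_contra hv
      exact hne ⟨‖v‖⁻¹ • v, by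
        simp [norm_smul, abs_of_nonneg (norm_nonneg v),
          inv_mul_cancel₀ (norm_ne_zero_iff.2 hv)]⟩
    simp [hv0]

noncomputable def lyapP (m : ℕ) (Φ : ℝ → ℝ → Matrix (Fin m) (Fin m) ℝ)
    (Q : Matrix (Fin m) (Fin m) ℝ) (t : ℝ) : Matrix (Fin m) (Fin m) ℝ :=
  Matrix.of fun i j => ∫ τ in Set.Ici t, ((Φ τ t)ᵀ * Q * Φ τ t) i j

theorem stmt_10 (m : ℕ)
    (A : ℝ → Matrix (Fin m) (Fin m) ℝ)
    (Φ : ℝ → ℝ → Matrix (Fin m) (Fin m) ℝ)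
    (Q : Matrix (Fin m) (Fin m) ℝ) (hQpd : Q.PosDef) (hQsym : Qᵀ = Q)
    (a γ lam : ℝ) (ha : 0 < a) (hγ : 0 < γ) (hlam : 0 < lam)
    (hAbd : ∀ t (v : EuclideanSpace ℝ (Fin m)),
      ‖Matrix.toEuclideanLin (A t) v‖ ≤ a * ‖v‖)
    (hΦtt : ∀ t, Φ t t = 1)
    (hΦbd : ∀ t τ : ℝ, 0 ≤ t → t ≤ τ → ∀ v : EuclideanSpace ℝ (Fin m),
      ‖Matrix.toEuclideanLin (Φ τ t) v‖ ≤ γ * Real.exp (-lam * (τ - t)) * ‖v‖)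
    (hΦderiv : ∀ (t₀ τ : ℝ) (v : Fin m → ℝ) (i : Fin m),
      HasDerivAt (fun s => (Φ s t₀).mulVec v i) (((A τ) * (Φ τ t₀)).mulVec v i) τ)
    (hmeas : ∀ (t : ℝ) (i j : Fin m), Measurable fun τ => Φ τ t i j) :
    (∀ t ≥ (0 : ℝ), ∀ i j : Fin m,
      MeasureTheory.IntegrableOn (fun τ => ((Φ τ t)ᵀ * Q * Φ τ t) i j) (Set.Ici t)) ∧
    (∀ t : ℝ, (lyapP m Φ Q t)ᵀ = lyapP m Φ Q t) ∧
    (∃ c₁ > (0 : ℝ), ∃ c₂ > (0 : ℝ), ∀ t ≥ (0 : ℝ), ∀ v : EuclideanSpace ℝ (Fin m),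
      c₁ * ‖v‖ ^ 2 ≤ ⟪v, Matrix.toEuclideanLin (lyapP m Φ Q t) v⟫ ∧
      ⟪v, Matrix.toEuclideanLin (lyapP m Φ Q t) v⟫ ≤ c₂ * ‖v‖ ^ 2) := by
  classical
  open MeasureTheory Set in
  -- notation
  set e := fun (v : Fin m → ℝ) => (WithLp.equiv 2 (Fin m → ℝ)).symm v with he
  set QL : EuclideanSpace ℝ (Fin m) →L[ℝ] EuclideanSpace ℝ (Fin m) :=
    LinearMap.toContinuousLinearMap (Matrix.toEuclideanLin Q) with hQL
  -- inner product bound for Q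
  have hQbd : ∀ x y : EuclideanSpace ℝ (Fin m),
      |⟪x, Matrix.toEuclideanLin Q y⟫| ≤ ‖QL‖ * (‖x‖ * ‖y‖) := by
    intro x y
    calc |⟪x, Matrix.toEuclideanLin Q y⟫| ≤ ‖x‖ * ‖Matrix.toEuclideanLin Q y‖ :=
          abs_real_inner_le_norm _ _
      _ = ‖QL y‖ * ‖x‖ := by rw [mul_comm]; rfl
      _ ≤ (‖QL‖ * ‖y‖) * ‖x‖ :=
          mul_le_mul_of_nonneg_right (QL.le_opNorm y) (norm_nonneg x)
      _ = ‖QL‖ * (‖x‖ * ‖y‖) := by ring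
  -- norm of Φ applied to vectors, as plain mulVec
  have hΦn : ∀ t τ : ℝ, 0 ≤ t → t ≤ τ → ∀ w : Fin m → ℝ,
      ‖e ((Φ τ t) *ᵥ w)‖ ≤ γ * Real.exp (-lam * (τ - t)) * ‖e w‖ := by
    intro t τ ht htτ w
    have := hΦbd t τ ht htτ (e w)
    simpa [he, Matrix.toEuclideanLin_apply] using this
  -- pointwise identity for quadratic forms
  have hptw : ∀ (N : Matrix (Fin m) (Fin m) ℝ) (v : Fin m → ℝ),
      v ⬝ᵥ (N *ᵥ v) = ∑ i, ∑ j, v i * (N i j * v j) := by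
    intro N v
    simp [dotProduct, Matrix.mulVec, Finset.mul_sum]
  -- the scalar integrand
  have hsplit : ∀ (t τ : ℝ) (v : Fin m → ℝ),
      v ⬝ᵥ (((Φ τ t)ᵀ * Q * Φ τ t) *ᵥ v)
        = ((Φ τ t) *ᵥ v) ⬝ᵥ (Q *ᵥ ((Φ τ t) *ᵥ v)) := by
    intro t τ v
    rw [← Matrix.mulVec_mulVec, ← Matrix.mulVec_mulVec, Matrix.dotProduct_mulVec,
      Matrix.vecMul_transpose]
  -- dotProduct as inner
  have hdi : ∀ (x y : Fin m → ℝ), x ⬝ᵥ (Q *ᵥ y) = ⟪e x, Matrix.toEuclideanLin Q (e y)⟫ := by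
    intro x y
    rw [aux_inner']
    rfl
  -- entry bound
  have hentry : ∀ t ≥ (0:ℝ), ∀ τ ∈ Ici t, ∀ i j : Fin m,
      |((Φ τ t)ᵀ * Q * Φ τ t) i j| ≤ (‖QL‖ * γ ^ 2) * Real.exp (-(2 * lam) * (τ - t)) := by
    intro t ht τ hτ i j
    have hτt : t ≤ τ := hτ
    have h0 : ((Φ τ t)ᵀ * Q * Φ τ t) i j
        = ((Φ τ t) *ᵥ Pi.single i 1) ⬝ᵥ (Q *ᵥ ((Φ τ t) *ᵥ Pi.single j 1)) := by
      have h : ((Φ τ t)ᵀ * Q * Φ τ t) i j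
          = Pi.single i 1 ⬝ᵥ (((Φ τ t)ᵀ * Q * Φ τ t) *ᵥ Pi.single j 1) := by
        simp [single_dotProduct, Matrix.mulVec_single]
      rw [h, ← Matrix.mulVec_mulVec, ← Matrix.mulVec_mulVec, Matrix.dotProduct_mulVec,
        Matrix.vecMul_transpose]
    rw [h0, hdi]
    have hsn : ∀ k : Fin m, ‖e (Pi.single k (1:ℝ))‖ = 1 := by
      intro k
      have : e (Pi.single k (1:ℝ)) = EuclideanSpace.single k (1:ℝ) := rfl
      rw [this, EuclideanSpace.norm_single, norm_one]
    have hb1 := hΦn t τ ht hτt (Pi.single i 1)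
    have hb2 := hΦn t τ ht hτt (Pi.single j 1)
    rw [hsn i, mul_one] at hb1
    rw [hsn j, mul_one] at hb2
    calc |⟪e ((Φ τ t) *ᵥ Pi.single i 1), Matrix.toEuclideanLin Q (e ((Φ τ t) *ᵥ Pi.single j 1))⟫|
        ≤ ‖QL‖ * (‖e ((Φ τ t) *ᵥ Pi.single i 1)‖ * ‖e ((Φ τ t) *ᵥ Pi.single j 1)‖) := hQbd _ _
      _ ≤ ‖QL‖ * ((γ * Real.exp (-lam * (τ - t))) * (γ * Real.exp (-lam * (τ - t)))) := by
          apply mul_le_mul_of_nonneg_left _ (norm_nonneg _)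
          exact mul_le_mul hb1 hb2 (norm_nonneg _) (by positivity)
      _ = (‖QL‖ * γ ^ 2) * Real.exp (-(2 * lam) * (τ - t)) := by
          rw [show (-(2 * lam) * (τ - t)) = (-lam * (τ - t)) + (-lam * (τ - t)) by ring,
            Real.exp_add]; ring
  -- dominating function integrable
  have hdom : ∀ (C t : ℝ), IntegrableOn (fun τ => C * Real.exp (-(2 * lam) * (τ - t))) (Ici t) := by
    intro C t
    rw [integrableOn_Ici_iff_integrableOn_Ioi]
    have h1 : IntegrableOn (fun τ : ℝ => Real.exp (-(2 * lam) * τ)) (Ioi t) :=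
      exp_neg_integrableOn_Ioi t (by positivity)
    have heq : (fun τ : ℝ => C * Real.exp (-(2 * lam) * (τ - t)))
        = fun τ => (C * Real.exp (2 * lam * t)) * Real.exp (-(2 * lam) * τ) := by
      funext τ; rw [mul_assoc, ← Real.exp_add]; ring_nf
    rw [heq]
    exact h1.const_mul _
  -- measurability of entries
  have hFmeas : ∀ (t : ℝ) (i j : Fin m),
      Measurable fun τ => ((Φ τ t)ᵀ * Q * Φ τ t) i j := by
    intro t i j
    simp only [Matrix.mul_apply, Matrix.transpose_apply]
    exact Finset.measurable_sum _ fun l _ =>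
      (Finset.measurable_sum _ fun k _ => ((hmeas t k i).mul measurable_const)).mul (hmeas t l j)
  -- Part 1 : integrability
  have hint : ∀ t ≥ (0:ℝ), ∀ i j : Fin m,
      IntegrableOn (fun τ => ((Φ τ t)ᵀ * Q * Φ τ t) i j) (Ici t) := by
    intro t ht i j
    refine Integrable.mono' (hdom (‖QL‖ * γ ^ 2) t) (hFmeas t i j).aestronglyMeasurable ?_
    rw [ae_restrict_iff' measurableSet_Ici]
    exact Filter.Eventually.of_forall fun τ hτ => by
      rw [Real.norm_eq_abs]; exact hentry t ht τ hτ i j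
  refine ⟨hint, ?_, ?_⟩
  · -- symmetry
    intro t
    ext i j
    have hsym : ∀ τ, ((Φ τ t)ᵀ * Q * Φ τ t) j i = ((Φ τ t)ᵀ * Q * Φ τ t) i j := by
      intro τ
      have : ((Φ τ t)ᵀ * Q * Φ τ t)ᵀ = (Φ τ t)ᵀ * Q * Φ τ t := by
        rw [Matrix.transpose_mul, Matrix.transpose_mul, Matrix.transpose_transpose, hQsym,
          Matrix.mul_assoc]
      conv_lhs => rw [← this]
      rw [Matrix.transpose_apply]
    simp only [lyapP, Matrix.transpose_apply, Matrix.of_apply]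
    exact integral_congr_ae (Filter.Eventually.of_forall fun τ => hsym τ)
  · -- bounds
    obtain ⟨μ, hμ, hcoer⟩ := posdef_coercive' hQpd
    refine ⟨μ * Real.exp (-(2 * a)), by positivity,
      (‖QL‖ + 1) * γ ^ 2 / (2 * lam), by positivity, fun t ht v' => ?_⟩
    set v : Fin m → ℝ := WithLp.equiv 2 (Fin m → ℝ) v' with hv
    have hev : e v = v' := rfl
    -- scalar integrand
    set G : ℝ → ℝ := fun τ => ((Φ τ t) *ᵥ v) ⬝ᵥ (Q *ᵥ ((Φ τ t) *ᵥ v)) with hG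
    have hGeq : ∀ τ, G τ = ∑ i, ∑ j, v i * (((Φ τ t)ᵀ * Q * Φ τ t) i j * v j) := by
      intro τ; simp only [hG]; rw [← hsplit, hptw]
    have hin : ∀ i j : Fin m,
        IntegrableOn (fun τ => v i * (((Φ τ t)ᵀ * Q * Φ τ t) i j * v j)) (Ici t) :=
      fun i j => ((hint t ht i j).mul_const _).const_mul _
    have hGint : IntegrableOn G (Ici t) := by
      have := integrable_finset_sum (μ := volume.restrict (Ici t)) (Finset.univ : Finset (Fin m))
        (fun i _ => integrable_finset_sum (Finset.univ : Finset (Fin m)) (fun j _ => hin i j))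
      exact this.congr (Filter.Eventually.of_forall fun τ => (hGeq τ).symm)
    -- quadratic form identity
    have hquad : ⟪v', Matrix.toEuclideanLin (lyapP m Φ Q t) v'⟫ = ∫ τ in Ici t, G τ := by
      rw [aux_inner']
      calc (WithLp.equiv 2 (Fin m → ℝ) v') ⬝ᵥ ((lyapP m Φ Q t) *ᵥ (WithLp.equiv 2 (Fin m → ℝ) v'))
          = ∑ i, ∑ j, v i * ((lyapP m Φ Q t) i j * v j) := hptw _ _
        _ = ∑ i, ∑ j, ∫ τ in Ici t, v i * (((Φ τ t)ᵀ * Q * Φ τ t) i j * v j) := by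
            refine Finset.sum_congr rfl fun i _ => Finset.sum_congr rfl fun j _ => ?_
            simp only [lyapP, Matrix.of_apply]
            rw [MeasureTheory.integral_const_mul, MeasureTheory.integral_mul_const]
        _ = ∑ i, ∫ τ in Ici t, ∑ j, v i * (((Φ τ t)ᵀ * Q * Φ τ t) i j * v j) :=
            Finset.sum_congr rfl fun i _ =>
              (integral_finset_sum _ (fun j _ => hin i j)).symm
        _ = ∫ τ in Ici t, ∑ i, ∑ j, v i * (((Φ τ t)ᵀ * Q * Φ τ t) i j * v j) :=
            (integral_finset_sum _ (fun i _ =>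
              integrable_finset_sum _ (fun j _ => hin i j))).symm
        _ = ∫ τ in Ici t, G τ :=
            integral_congr_ae (Filter.Eventually.of_forall fun τ => (hGeq τ).symm)
    -- nonnegativity and coercive lower bound pointwise
    have hGc : ∀ τ, μ * ‖e ((Φ τ t) *ᵥ v)‖ ^ 2 ≤ G τ := by
      intro τ
      simp only [hG]
      rw [hdi]
      exact hcoer _
    have hGnn : ∀ τ, 0 ≤ G τ := fun τ => le_trans (by positivity) (hGc τ)
    -- lower bound on the norm of Φ v via Gronwall
    have hΦlow : ∀ s : ℝ, t ≤ s →
        Real.exp (-(a * (s - t))) * ‖v'‖ ≤ ‖e ((Φ s t) *ᵥ v)‖ := by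
      intro s hts
      have hfd : ∀ u, HasDerivAt (fun u => e ((Φ u t) *ᵥ v)) (e ((A u * Φ u t) *ᵥ v)) u := by
        intro u
        have hp : HasDerivAt (fun u => (Φ u t) *ᵥ v) ((A u * Φ u t) *ᵥ v) u :=
          hasDerivAt_pi.2 fun i => hΦderiv t u v i
        exact ((PiLp.continuousLinearEquiv 2 ℝ
          (fun _ : Fin m => ℝ)).symm.toContinuousLinearMap.hasFDerivAt).comp_hasDerivAt u hp
      have hbd : ∀ u, ‖e ((A u * Φ u t) *ᵥ v)‖ ≤ a * ‖e ((Φ u t) *ᵥ v)‖ := by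
        intro u
        have h1 : e ((A u * Φ u t) *ᵥ v)
            = Matrix.toEuclideanLin (A u) (e ((Φ u t) *ᵥ v)) := by
          rw [← Matrix.mulVec_mulVec]; rfl
        rw [h1]; exact hAbd u _
      have hkey := gronwall_lower' hfd hbd hts
      have hft : e ((Φ t t) *ᵥ v) = v' := by rw [hΦtt t, Matrix.one_mulVec]; exact hev
      rw [hft] at hkey
      calc Real.exp (-(a * (s - t))) * ‖v'‖
          ≤ Real.exp (-(a * (s - t))) * (Real.exp (a * (s - t)) * ‖e ((Φ s t) *ᵥ v)‖) :=
            mul_le_mul_of_nonneg_left hkey (Real.exp_pos _).le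
        _ = ‖e ((Φ s t) *ᵥ v)‖ := by rw [← mul_assoc, ← Real.exp_add]; simp
    constructor
    · -- lower bound
      have hw : ∀ τ ∈ Icc t (t+1), μ * Real.exp (-(2 * a)) * ‖v'‖ ^ 2 ≤ G τ := by
        intro τ hτ
        refine le_trans ?_ (hGc τ)
        have h1 := hΦlow τ hτ.1
        have h2 : (Real.exp (-(a * (τ - t))) * ‖v'‖) ^ 2 ≤ ‖e ((Φ τ t) *ᵥ v)‖ ^ 2 := by
          apply pow_le_pow_left₀ (by positivity) h1
        have h3 : Real.exp (-(2 * a)) * ‖v'‖ ^ 2 ≤ (Real.exp (-(a * (τ - t))) * ‖v'‖) ^ 2 := by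
          rw [mul_pow, ← Real.exp_nat_mul]
          have : Real.exp (-(2 * a)) ≤ Real.exp ((2 : ℕ) * -(a * (τ - t))) := by
            apply Real.exp_le_exp.2
            have hτ1 : τ - t ≤ 1 := by linarith [hτ.2]
            have hτ0 : 0 ≤ τ - t := by linarith [hτ.1]
            push_cast
            nlinarith
          exact mul_le_mul_of_nonneg_right this (by positivity)
        calc μ * Real.exp (-(2 * a)) * ‖v'‖ ^ 2
            = μ * (Real.exp (-(2 * a)) * ‖v'‖ ^ 2) := by ring
          _ ≤ μ * ‖e ((Φ τ t) *ᵥ v)‖ ^ 2 :=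
              mul_le_mul_of_nonneg_left (le_trans h3 h2) hμ.le
      rw [hquad]
      have hconst : ∫ τ in Icc t (t+1), (μ * Real.exp (-(2 * a)) * ‖v'‖ ^ 2)
          = μ * Real.exp (-(2 * a)) * ‖v'‖ ^ 2 := by
        rw [setIntegral_const, Real.volume_real_Icc]
        norm_num
      have h1 : ∫ τ in Icc t (t+1), (μ * Real.exp (-(2 * a)) * ‖v'‖ ^ 2) ≤
          ∫ τ in Icc t (t+1), G τ :=
        setIntegral_mono_on (integrableOn_const measure_Icc_lt_top.ne)
          (hGint.mono_set (Icc_subset_Ici_self)) measurableSet_Icc hw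
      have h2 : ∫ τ in Icc t (t+1), G τ ≤ ∫ τ in Ici t, G τ := by
        apply setIntegral_mono_set hGint
        · exact Filter.Eventually.of_forall fun τ => hGnn τ
        · exact HasSubset.Subset.eventuallyLE Icc_subset_Ici_self
      rw [hconst] at h1
      linarith
    · -- upper bound
      rw [hquad]
      have hub : ∀ τ ∈ Ici t,
          G τ ≤ (‖QL‖ * γ ^ 2 * ‖v'‖ ^ 2) * Real.exp (-(2 * lam) * (τ - t)) := by
        intro τ hτ
        have hτt : t ≤ τ := hτ
        simp only [hG]
        rw [hdi]
        have habs := le_abs_self (⟪e ((Φ τ t) *ᵥ v), Matrix.toEuclideanLin Q (e ((Φ τ t) *ᵥ v))⟫)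
        refine le_trans habs (le_trans (hQbd _ _) ?_)
        have hb := hΦn t τ ht hτt v
        rw [hev] at hb
        calc ‖QL‖ * (‖e ((Φ τ t) *ᵥ v)‖ * ‖e ((Φ τ t) *ᵥ v)‖)
            ≤ ‖QL‖ * ((γ * Real.exp (-lam * (τ - t)) * ‖v'‖) *
                (γ * Real.exp (-lam * (τ - t)) * ‖v'‖)) := by
              apply mul_le_mul_of_nonneg_left _ (norm_nonneg _)
              exact mul_le_mul hb hb (norm_nonneg _) (by positivity)
          _ = (‖QL‖ * γ ^ 2 * ‖v'‖ ^ 2) * Real.exp (-(2 * lam) * (τ - t)) := by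
              rw [show (-(2 * lam) * (τ - t)) = (-lam * (τ - t)) + (-lam * (τ - t)) by ring,
                Real.exp_add]; ring
      have hmono : ∫ τ in Ici t, G τ ≤
          ∫ τ in Ici t, (‖QL‖ * γ ^ 2 * ‖v'‖ ^ 2) * Real.exp (-(2 * lam) * (τ - t)) :=
        setIntegral_mono_on hGint (hdom _ t) measurableSet_Ici hub
      have hval : ∫ τ in Ici t, (‖QL‖ * γ ^ 2 * ‖v'‖ ^ 2) * Real.exp (-(2 * lam) * (τ - t))
          = (‖QL‖ * γ ^ 2 * ‖v'‖ ^ 2) * (1 / (2 * lam)) := by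
        rw [MeasureTheory.integral_Ici_eq_integral_Ioi, MeasureTheory.integral_const_mul]
        congr 1
        rw [show (fun τ : ℝ => Real.exp (-(2 * lam) * (τ - t)))
          = fun τ => Real.exp (-((2 * lam) * (τ - t))) by funext τ; ring_nf]
        exact exp_int' t (by positivity)
      rw [hval] at hmono
      refine le_trans hmono ?_
      have hQQ : ‖QL‖ * γ ^ 2 ≤ (‖QL‖ + 1) * γ ^ 2 := by nlinarith [norm_nonneg QL, sq_nonneg γ]
      have hchain : ‖QL‖ * γ ^ 2 * ‖v'‖ ^ 2 * (1 / (2 * lam))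
          ≤ ((‖QL‖ + 1) * γ ^ 2) * ‖v'‖ ^ 2 * (1 / (2 * lam)) := by
        apply mul_le_mul_of_nonneg_right
          (mul_le_mul_of_nonneg_right hQQ (sq_nonneg _)) (by positivity)
      refine le_trans hchain (le_of_eq (by ring))
end

section
/- Let A : ℝ≥0 → ℝ^{m×m} be continuous on an interval [t₀, t₁), bounded, with exponentially decaying transition matrix ‖Φ(τ,t)‖ ≤ γe^{-λ(τ-t)}, and let P(t) = ∫_t^∞ Φ(τ,t)ᵀ Q Φ(τ,t) dτ for a symmetric positive definite Q. Then for t ∈ (t₀, t₁), P is differentiable and satisfies the differential Lyapunov equation -Ṗ(t) = A(t)ᵀ P(t) + P(t) A(t) + Q. -/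
open Matrix
open MeasureTheory

lemma aux_entry_bd {m : ℕ} (M : Matrix (Fin m) (Fin m) ℝ) (a : ℝ)
    (h : ∀ v : EuclideanSpace ℝ (Fin m), ‖Matrix.toEuclideanLin M v‖ ≤ a * ‖v‖) (k j : Fin m) :
    |M k j| ≤ a := by
  have h1 := h (EuclideanSpace.single j (1:ℝ))
  rw [EuclideanSpace.norm_single, norm_one, mul_one] at h1
  set w : EuclideanSpace ℝ (Fin m) := Matrix.toEuclideanLin M (EuclideanSpace.single j (1:ℝ)) with hw
  have h2 : w k = M k j := by
    simp [hw, Matrix.toEuclideanLin_apply, Matrix.mulVec, dotProduct,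
      EuclideanSpace.single_apply]
  have h3 : |w k| ≤ ‖w‖ := by
    rw [EuclideanSpace.norm_eq]
    have : |w k| = Real.sqrt (‖w k‖^2) := by
      rw [Real.sqrt_sq_eq_abs]; simp
    rw [this]
    apply Real.sqrt_le_sqrt
    exact Finset.single_le_sum (f := fun i => ‖w i‖^2) (fun i _ => sq_nonneg _) (Finset.mem_univ k)
  rw [h2] at h3
  linarith

lemma aux_cocycle {m : ℕ} (A : ℝ → Matrix (Fin m) (Fin m) ℝ)
    (Φ : ℝ → ℝ → Matrix (Fin m) (Fin m) ℝ) (a : ℝ) (ha : 0 < a)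
    (hAbd : ∀ t (v : EuclideanSpace ℝ (Fin m)),
      ‖Matrix.toEuclideanLin (A t) v‖ ≤ a * ‖v‖)
    (hΦtt : ∀ t, Φ t t = 1)
    (hΦdt : ∀ (τ t : ℝ) (i j : Fin m),
      HasDerivAt (fun s => Φ τ s i j) ((-(Φ τ t) * A t) i j) t) :
    ∀ τ t s : ℝ, Φ τ s = Φ τ t * Φ t s := by
  intro τ t s
  classical
  have hA_entry : ∀ u (k l : Fin m), |A u k l| ≤ a := fun u => aux_entry_bd (A u) a (hAbd u)
  set E := Fin m → Fin m → ℝ with hE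
  set v : ℝ → E → E := fun u X => fun k l => -(∑ p, X k p * A u p l) with hv_def
  -- Lipschitz
  have hlip : ∀ u : ℝ, LipschitzWith (Real.toNNReal (m * a)) (v u) := by
    intro u
    set L : E →ₗ[ℝ] E :=
      { toFun := v u
        map_add' := by
          intro X Y; funext k l
          show -(∑ p, (X k p + Y k p) * A u p l) = _
          have hr : ∀ Z W : E, (Z + W) k l = Z k l + W k l := fun _ _ => rfl
          rw [hr]
          show _ = -(∑ p, X k p * A u p l) + -(∑ p, Y k p * A u p l)
          simp [add_mul, Finset.sum_add_distrib]
          ring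
        map_smul' := by
          intro c X; funext k l
          have hr : (c • (fun k l => -(∑ p, X k p * A u p l) : E)) k l = c * -(∑ p, X k p * A u p l) := rfl
          rw [RingHom.id_apply]
          show -(∑ p, (c * X k p) * A u p l) = _
          rw [hr]
          simp [Finset.mul_sum, mul_assoc] } with hL
    have hb : ∀ X : E, ‖L X‖ ≤ (m * a) * ‖X‖ := by
      intro X
      have hnn : (0:ℝ) ≤ (m * a) * ‖X‖ := by positivity
      rw [pi_norm_le_iff_of_nonneg hnn]
      intro k
      rw [pi_norm_le_iff_of_nonneg hnn]
      intro l
      have : L X k l = -(∑ p, X k p * A u p l) := rfl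
      rw [this]
      rw [Real.norm_eq_abs, abs_neg]
      calc |∑ p, X k p * A u p l| ≤ ∑ p, |X k p * A u p l| := Finset.abs_sum_le_sum_abs _ _
        _ ≤ ∑ _p : Fin m, ‖X‖ * a := by
            apply Finset.sum_le_sum
            intro p _
            rw [abs_mul]
            apply mul_le_mul
            · calc |X k p| = ‖X k p‖ := (Real.norm_eq_abs _).symm
                _ ≤ ‖X k‖ := norm_le_pi_norm (X k) p
                _ ≤ ‖X‖ := norm_le_pi_norm X k
            · exact hA_entry u p l
            · exact abs_nonneg _
            · exact norm_nonneg _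
        _ = (m * a) * ‖X‖ := by
            rw [Finset.sum_const, Finset.card_univ, Fintype.card_fin, nsmul_eq_mul]; ring
    exact AddMonoidHomClass.lipschitz_of_bound L (m * a) hb
  set f : ℝ → E := fun u => fun k l => Φ τ u k l with hf_def
  set g : ℝ → E := fun u => fun k l => (Φ τ t * Φ t u) k l with hg_def
  have hv' : ∀ u, LipschitzOnWith (Real.toNNReal (m*a)) (v u) Set.univ :=
    fun u => (hlip u).lipschitzOnWith
  have hf' : ∀ u : ℝ, HasDerivAt f (v u (f u)) u := by
    intro u
    rw [hasDerivAt_pi]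
    intro k
    rw [hasDerivAt_pi]
    intro l
    refine (hΦdt τ u k l).congr_deriv (Eq.symm ?_)
    show -(∑ p, Φ τ u k p * A u p l) = (-(Φ τ u) * A u) k l
    simp [Matrix.mul_apply, Matrix.neg_apply]
  have hg' : ∀ u : ℝ, HasDerivAt g (v u (g u)) u := by
    intro u
    rw [hasDerivAt_pi]; intro k; rw [hasDerivAt_pi]; intro l
    have hterm : ∀ p : Fin m, HasDerivAt (fun w => Φ τ t k p * Φ t w p l)
        (Φ τ t k p * ((-(Φ t u) * A u) p l)) u := fun p => (hΦdt t u p l).const_mul _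
    have hsum := HasDerivAt.fun_sum (fun p (_ : p ∈ Finset.univ) => hterm p)
    have hfun : (fun w => ∑ p, Φ τ t k p * Φ t w p l) = fun w => g w k l := by
      funext w; rw [hg_def]; simp [Matrix.mul_apply]
    rw [hfun] at hsum
    convert hsum using 1
    show -(∑ p, (Φ τ t * Φ t u) k p * A u p l) = _
    have h1 : ∑ p, Φ τ t k p * ((-(Φ t u) * A u) p l) = (Φ τ t * (-(Φ t u) * A u)) k l :=
      (Matrix.mul_apply).symm
    rw [h1]
    have hm : Φ τ t * (-(Φ t u) * A u) = -((Φ τ t * Φ t u) * A u) := by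
      rw [neg_mul, mul_neg, mul_assoc]
    rw [hm]
    simp [Matrix.neg_apply, Matrix.mul_apply]
  have heq : f t = g t := by
    funext k l; rw [hf_def, hg_def]; simp [hΦtt]
  have hmem : t ∈ Set.Ioo (min s t - 1) (max s t + 1) := by
    constructor
    · have := min_le_right s t; linarith
    · have := le_max_right s t; linarith
  have hEq := ODE_solution_unique_of_mem_Ioo (s := fun _ => (Set.univ : Set E)) (fun u _ => hv' u) hmem
    (fun u _ => ⟨hf' u, Set.mem_univ _⟩) (fun u _ => ⟨hg' u, Set.mem_univ _⟩) heq
  have hsmem : s ∈ Set.Ioo (min s t - 1) (max s t + 1) := by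
    constructor
    · have := min_le_left s t; linarith
    · have := le_max_left s t; linarith
  have hfs := hEq hsmem
  ext k l
  have := congrFun (congrFun hfs k) l
  simpa [hf_def, hg_def] using this

lemma aux_cont {m : ℕ} (Φ : ℝ → ℝ → Matrix (Fin m) (Fin m) ℝ) (t : ℝ)
    (hΦtt : ∀ t, Φ t t = 1)
    (hcoc : ∀ τ t s : ℝ, Φ τ s = Φ τ t * Φ t s)
    (hΦcont2 : ∀ i j : Fin m, Continuous fun τ => Φ t τ i j) :
    Continuous fun τ => Φ τ t := by
  classical
  have hinv : ∀ τ, Φ t τ * Φ τ t = 1 := by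
    intro τ
    have h := hcoc t τ t
    rw [hΦtt t] at h
    exact h.symm
  have hC : Continuous fun τ => Φ t τ := continuous_matrix fun i j => hΦcont2 i j
  have hdet : ∀ τ, IsUnit (Φ t τ).det := fun τ => Matrix.isUnit_det_of_right_inverse (hinv τ)
  have hdet_ne : ∀ τ, (Φ t τ).det ≠ 0 := fun τ => (hdet τ).ne_zero
  have hformula : ∀ τ, Φ τ t = ((Φ t τ).det)⁻¹ • (Φ t τ).adjugate := by
    intro τ
    have h := Matrix.inv_eq_right_inv (hinv τ)
    rw [← h, Matrix.inv_def, Ring.inverse_eq_inv']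
  have : Continuous fun τ => ((Φ t τ).det)⁻¹ • (Φ t τ).adjugate :=
    ((hC.matrix_det).inv₀ hdet_ne).smul hC.matrix_adjugate
  convert this using 2 with τ
  exact hformula τ

theorem stmt_11 (m : ℕ) (t₀ t₁ : ℝ)
    (A : ℝ → Matrix (Fin m) (Fin m) ℝ)
    (Φ : ℝ → ℝ → Matrix (Fin m) (Fin m) ℝ)
    (Q : Matrix (Fin m) (Fin m) ℝ) (hQpd : Q.PosDef) (hQsym : Qᵀ = Q)
    (a γ lam : ℝ) (ha : 0 < a) (hγ : 0 < γ) (hlam : 0 < lam)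
    (hAcont : ContinuousOn A (Set.Ico t₀ t₁))
    (hAbd : ∀ t (v : EuclideanSpace ℝ (Fin m)),
      ‖Matrix.toEuclideanLin (A t) v‖ ≤ a * ‖v‖)
    (hΦtt : ∀ t, Φ t t = 1)
    (hΦbd : ∀ t τ : ℝ, t ≤ τ → ∀ i j : Fin m,
      |Φ τ t i j| ≤ γ * Real.exp (-lam * (τ - t)))
    (hΦdt : ∀ (τ t : ℝ) (i j : Fin m),
      HasDerivAt (fun s => Φ τ s i j) ((-(Φ τ t) * A t) i j) t)
    (hint : ∀ (t : ℝ) (i j : Fin m),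
      MeasureTheory.IntegrableOn (fun τ => ((Φ τ t)ᵀ * Q * Φ τ t) i j) (Set.Ici t)) :
    ∀ t ∈ Set.Ioo t₀ t₁, ∀ i j : Fin m,
      HasDerivAt (fun s => lyapP m Φ Q s i j)
        ((-((A t)ᵀ * lyapP m Φ Q t + lyapP m Φ Q t * A t + Q)) i j) t := by
  intro t _ht i j
  classical
  have hcoc := aux_cocycle A Φ a ha hAbd hΦtt hΦdt
  have hΦcont2 : ∀ (i j : Fin m), Continuous fun τ => Φ t τ i j := fun i j =>
    continuous_iff_continuousAt.2 fun u => (hΦdt t u i j).continuousAt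
  have hΦτcont : Continuous fun τ => Φ τ t := aux_cont Φ t hΦtt hcoc hΦcont2
  set F : ℝ → Matrix (Fin m) (Fin m) ℝ := fun τ => (Φ τ t)ᵀ * Q * Φ τ t with hF_def
  have hFcont : ∀ k l : Fin m, Continuous fun τ => F τ k l := by
    intro k l
    have h1 : Continuous F :=
      ((hΦτcont.matrix_transpose).matrix_mul continuous_const).matrix_mul hΦτcont
    exact h1.matrix_elem k l
  have hFt : F t = Q := by rw [hF_def]; simp [hΦtt]
  have hFint : ∀ (s : ℝ) (k l : Fin m),
      MeasureTheory.IntegrableOn (fun τ => F τ k l) (Set.Ici s) := by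
    intro s k l
    rcases le_total t s with h | h
    · exact (hint t k l).mono_set (Set.Ici_subset_Ici.2 h)
    · have h1 : MeasureTheory.IntegrableOn (fun τ => F τ k l) (Set.Icc s t) :=
        (hFcont k l).integrableOn_Icc
      have h2 := hint t k l
      rw [show Set.Ici s = Set.Icc s t ∪ Set.Ici t from (Set.Icc_union_Ici_eq_Ici h).symm]
      exact h1.union h2
  set H : ℝ → Matrix (Fin m) (Fin m) ℝ :=
    fun s => Matrix.of fun k l => ∫ τ in Set.Ici s, F τ k l with hH_def
  have hHt : H t = lyapP m Φ Q t := rfl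
  have hHder : ∀ k l : Fin m, HasDerivAt (fun s => H s k l) (-(Q k l)) t := by
    intro k l
    have hsplit : ∀ s : ℝ, H s k l = H t k l - ∫ u in t..s, F u k l := by
      intro s
      rcases le_total t s with h | h
      · have hu : Set.Ici t = Set.Ico t s ∪ Set.Ici s := (Set.Ico_union_Ici_eq_Ici h).symm
        have hdisj : Disjoint (Set.Ico t s) (Set.Ici s) := by
          rw [Set.disjoint_left]
          rintro x ⟨_, hx2⟩ hx3
          exact absurd hx3 (not_le.2 hx2)
        have hint1 : MeasureTheory.IntegrableOn (fun τ => F τ k l) (Set.Ico t s) :=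
          (hFint t k l).mono_set Set.Ico_subset_Ici_self
        have hH : H t k l = (∫ τ in Set.Ico t s, F τ k l) + ∫ τ in Set.Ici s, F τ k l := by
          show (∫ τ in Set.Ici t, F τ k l) = _
          rw [hu, MeasureTheory.setIntegral_union hdisj measurableSet_Ici hint1 (hFint s k l)]
        have hIoc : (∫ u in t..s, F u k l) = ∫ τ in Set.Ico t s, F τ k l := by
          rw [intervalIntegral.integral_of_le h, MeasureTheory.integral_Ioc_eq_integral_Ioo,
            MeasureTheory.integral_Ico_eq_integral_Ioo]
        show (∫ τ in Set.Ici s, F τ k l) = _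
        rw [hH, hIoc]; ring
      · have hu : Set.Ici s = Set.Ico s t ∪ Set.Ici t := (Set.Ico_union_Ici_eq_Ici h).symm
        have hdisj : Disjoint (Set.Ico s t) (Set.Ici t) := by
          rw [Set.disjoint_left]
          rintro x ⟨_, hx2⟩ hx3
          exact absurd hx3 (not_le.2 hx2)
        have hint1 : MeasureTheory.IntegrableOn (fun τ => F τ k l) (Set.Ico s t) :=
          (hFint s k l).mono_set Set.Ico_subset_Ici_self
        have hH : H s k l = (∫ τ in Set.Ico s t, F τ k l) + ∫ τ in Set.Ici t, F τ k l := by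
          show (∫ τ in Set.Ici s, F τ k l) = _
          rw [hu, MeasureTheory.setIntegral_union hdisj measurableSet_Ici hint1 (hFint t k l)]
        have hIoc : (∫ u in t..s, F u k l) = -∫ τ in Set.Ico s t, F τ k l := by
          rw [intervalIntegral.integral_symm, intervalIntegral.integral_of_le h,
            MeasureTheory.integral_Ioc_eq_integral_Ioo,
            MeasureTheory.integral_Ico_eq_integral_Ioo]
        rw [hH, hIoc, sub_neg_eq_add]
        have hh : H t k l = ∫ τ in Set.Ici t, F τ k l := rfl
        rw [hh]; ring
    have hiv : HasDerivAt (fun s => ∫ u in t..s, F u k l) (F t k l) t := by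
      apply intervalIntegral.integral_hasDerivAt_right
      · exact (hFcont k l).intervalIntegrable _ _
      · exact (hFcont k l).stronglyMeasurableAtFilter _ _
      · exact (hFcont k l).continuousAt
    have hd := (hasDerivAt_const t (H t k l)).sub hiv
    rw [show (fun s => H s k l) = fun s => H t k l - ∫ u in t..s, F u k l from funext hsplit]
    rw [← hFt]
    exact hd.congr_deriv (by ring)
  have hrep : ∀ s : ℝ, lyapP m Φ Q s i j = ∑ k, ∑ l, Φ t s k i * H s k l * Φ t s l j := by
    intro s
    have h1 : ∀ τ, ((Φ τ s)ᵀ * Q * Φ τ s) i j = ∑ k, ∑ l, Φ t s k i * F τ k l * Φ t s l j := by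
      intro τ
      rw [hcoc τ t s]
      have h2 : (Φ τ t * Φ t s)ᵀ * Q * (Φ τ t * Φ t s) = (Φ t s)ᵀ * F τ * Φ t s := by
        rw [hF_def]
        simp only [Matrix.transpose_mul, Matrix.mul_assoc]
      rw [h2]
      simp only [Matrix.mul_apply, Matrix.transpose_apply, Finset.sum_mul]
      rw [Finset.sum_comm]
    have hI1 : ∀ k l : Fin m, MeasureTheory.Integrable
        (fun τ => Φ t s k i * F τ k l * Φ t s l j)
        (MeasureTheory.volume.restrict (Set.Ici s)) :=
      fun k l => ((hFint s k l).const_mul _).mul_const _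
    have h3 : lyapP m Φ Q s i j = ∫ τ in Set.Ici s, ∑ k, ∑ l, Φ t s k i * F τ k l * Φ t s l j := by
      show (∫ τ in Set.Ici s, ((Φ τ s)ᵀ * Q * Φ τ s) i j) = _
      congr 1
      exact funext h1
    rw [h3, MeasureTheory.integral_finset_sum _ (fun k _ =>
      MeasureTheory.integrable_finset_sum _ (fun l _ => hI1 k l))]
    refine Finset.sum_congr rfl fun k _ => ?_
    rw [MeasureTheory.integral_finset_sum _ (fun l _ => hI1 k l)]
    refine Finset.sum_congr rfl fun l _ => ?_
    show (∫ τ in Set.Ici s, Φ t s k i * F τ k l * Φ t s l j) = _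
    rw [MeasureTheory.integral_mul_const, MeasureTheory.integral_const_mul]
    rfl
  have hkey : ∀ k l : Fin m, HasDerivAt (fun s => Φ t s k i * H s k l * Φ t s l j)
      ( (((-(Φ t t) * A t) k i) * H t k l + Φ t t k i * (-(Q k l))) * Φ t t l j
        + (Φ t t k i * H t k l) * ((-(Φ t t) * A t) l j) ) t :=
    fun k l => ((hΦdt t t k i).mul (hHder k l)).mul (hΦdt t t l j)
  have hsum : HasDerivAt (fun s => ∑ k, ∑ l, Φ t s k i * H s k l * Φ t s l j)
      (∑ k, ∑ l, ((((-(Φ t t) * A t) k i) * H t k l + Φ t t k i * (-(Q k l))) * Φ t t l j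
        + (Φ t t k i * H t k l) * ((-(Φ t t) * A t) l j))) t :=
    HasDerivAt.fun_sum fun k _ => HasDerivAt.fun_sum fun l _ => hkey k l
  rw [show (fun s => lyapP m Φ Q s i j) = fun s => ∑ k, ∑ l, Φ t s k i * H s k l * Φ t s l j
    from funext hrep]
  convert hsum using 1
  rw [← hHt]
  simp [hΦtt, Matrix.one_apply, Matrix.neg_apply, Matrix.add_apply, Matrix.mul_apply,
    Matrix.transpose_apply, Finset.sum_add_distrib, mul_ite, ite_mul,
    Finset.sum_ite_eq, Finset.sum_ite_eq']
  ring
end
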